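/- arXiv:1204.4286 — 8 statements merged into one kernel-verified Lean document; each statement's English description precedes it below -/
import Mathlib

section
/- If u : ℝ₊^m → ℝ is continuous and non-decreasing, then for every bundle x ∈ ℝ₊^m there exists a parsimonious bundle y ≤ x with u(y) = u(x); that is, y satisfies u(z) < u(y) for every z ∈ ℝ₊^m with z ≤ y and z ≠ y. -/
open scoped NNReal

/-- A bundle is a vector of nonnegative reals. -/
abbrev Bundle (m : ℕ) := Fin m → ℝ≥0

/-- A bundle `x` is parsimonious for `u` if every `z ≤ x` with `z ≠ x` has strictly
smaller utility. -/
def Parsimonious {m : ℕ} (u : Bundle m → ℝ) (x : Bundle m) : Prop :=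
  ∀ z : Bundle m, z ≤ x → z ≠ x → u z < u x

/-!
Among the bundles `y ≤ x` with `u y = u x`, which form a compact set because `u` is continuous,
pick one minimising the total quantity `∑ i, y i`. Any `z < y` has a smaller total, so it cannot
lie in that set; as `u z ≤ u y` by monotonicity, this forces `u z < u y`.
-/

theorem IsCompact.exists_minimal_of_strictMono {α β : Type*} [TopologicalSpace α] [Preorder α]
    [TopologicalSpace β] [LinearOrder β] [ClosedIicTopology β] {K : Set α} (hK : IsCompact K)
    (hne : K.Nonempty) {f : α → β} (hf : StrictMono f) (hcont : ContinuousOn f K) :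
    ∃ y, Minimal (· ∈ K) y := by
  obtain ⟨y, hyK, hmin⟩ := hK.exists_isMinOn hne hcont
  refine ⟨y, hyK, fun z hzK hzy => ?_⟩
  by_contra hyz
  exact (hf (lt_of_le_not_ge hzy hyz)).not_ge (hmin hzK)

theorem parsimonious_of_minimal {m : ℕ} {u : Bundle m → ℝ} (hmono : Monotone u)
    {x y : Bundle m} (hy : Minimal (fun y => y ≤ x ∧ u y = u x) y) : Parsimonious u y := by
  intro z hzy hne
  refine (hmono hzy).lt_of_ne fun heq => hne ?_
  exact hy.eq_of_le ⟨hzy.trans hy.1.1, heq.trans hy.1.2⟩ hzy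

theorem exists_parsimonious_le {m : ℕ} (u : Bundle m → ℝ)
    (hcont : Continuous u) (hmono : Monotone u) (x : Bundle m) :
    ∃ y : Bundle m, y ≤ x ∧ u y = u x ∧ Parsimonious u y := by
  have hK : IsCompact {y | y ≤ x ∧ u y = u x} :=
    (Set.Icc_bot (a := x) ▸ isCompact_Icc).inter_right (isClosed_singleton.preimage hcont)
  obtain ⟨y, hy⟩ := hK.exists_minimal_of_strictMono ⟨x, le_rfl, rfl⟩ Fintype.sum_strictMono
    (continuous_finsetSum _ fun i _ => continuous_apply i).continuousOn
  exact ⟨y, hy.1.1, hy.1.2, parsimonious_of_minimal hmono hy⟩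
end

section
/- If u : ℝ₊^m → ℝ is continuous and perfectly complementary (i.e., u(x ⊓ y) = min(u(x), u(y)) for all x, y, where ⊓ is the coordinatewise minimum), then any two parsimonious bundles for u are comparable: for all parsimonious x, y, either x ≤ y or y ≤ x. -/
open scoped NNReal

/-- `u` is perfectly complementary if the utility of the coordinatewise minimum of
two bundles is the minimum of their utilities. -/
def PerfComp {m : ℕ} (u : Bundle m → ℝ) : Prop :=
  ∀ x y : Bundle m, u (x ⊓ y) = min (u x) (u y)

theorem parsimonious_comparable {m : ℕ} (u : Bundle m → ℝ)
    (hcont : Continuous u) (hmono : Monotone u) (hpc : PerfComp u)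
    (x y : Bundle m) (hx : Parsimonious u x) (hy : Parsimonious u y) :
    x ≤ y ∨ y ≤ x := by
  by_contra h
  push_neg at h
  obtain ⟨hxy, hyx⟩ := h
  have hzx : x ⊓ y ≠ x := fun he => hxy (by rw [← inf_eq_left]; exact he)
  have hzy : x ⊓ y ≠ y := fun he => hyx (by rw [← inf_eq_right]; exact he)
  have h1 := hx (x ⊓ y) inf_le_left hzx
  have h2 := hy (x ⊓ y) inf_le_right hzy
  exact (lt_min h1 h2).ne (hpc x y)
end

section
/- If u : ℝ₊^m → ℝ is continuous, non-decreasing, and there exists w : ℝ₊ → (ℝ₊)^m such that for all t ≥ 0 and all x ∈ ℝ₊^m, u(x) ≥ t iff x ≥ w(t) coordinatewise, then u is perfectly complementary: u(x ⊓ y) = min(u(x), u(y)) for all x, y. -/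
open scoped NNReal

/-- If `u` is continuous, non-decreasing, nonnegative-valued, and admits a
parsimonious bundle representation `w` (i.e. `u x ≥ t` iff `x ≥ w t` for all `t ≥ 0`),
then `u` is perfectly complementary. -/
theorem perfComp_of_representation {m : ℕ} (u : Bundle m → ℝ)
    (hcont : Continuous u) (hmono : Monotone u)
    (hnonneg : ∀ x, 0 ≤ u x)
    (w : ℝ → Bundle m)
    (hw : ∀ t : ℝ, 0 ≤ t → ∀ x : Bundle m, (t ≤ u x ↔ w t ≤ x)) :
    PerfComp u := by
  intro x y
  apply le_antisymm
  · exact le_min (hmono inf_le_left) (hmono inf_le_right)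
  · set t := min (u x) (u y) with ht
    have ht0 : 0 ≤ t := le_min (hnonneg x) (hnonneg y)
    have hx : w t ≤ x := (hw t ht0 x).mp (min_le_left _ _)
    have hy : w t ≤ y := (hw t ht0 y).mp (min_le_right _ _)
    exact (hw t ht0 (x ⊓ y)).mpr (le_inf hx hy)
end

section
/- If u : ℝ₊^m → ℝ is continuous, non-decreasing, and perfectly complementary, and x is a parsimonious bundle for u, then x = w(u(x)), where w is the parsimonious bundle representation of u. -/
open scoped NNReal

/-- If `u` is continuous, non-decreasing, perfectly complementary, with parsimonious
bundle representation `w` (valid for all `t` in the range of `u`), then every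
parsimonious bundle `x` equals `w (u x)`. -/
theorem parsimonious_eq_representation {m : ℕ} (u : Bundle m → ℝ)
    (hcont : Continuous u) (hmono : Monotone u) (hpc : PerfComp u)
    (w : ℝ → Bundle m)
    (hw : ∀ t : ℝ, (∃ z : Bundle m, u z = t) → ∀ x : Bundle m, (t ≤ u x ↔ w t ≤ x))
    (x : Bundle m) (hx : Parsimonious u x) :
    x = w (u x) := by
  have h := hw (u x) ⟨x, rfl⟩
  have h1 : w (u x) ≤ x := (h x).mp le_rfl
  have h2 : u x ≤ u (w (u x)) := (h (w (u x))).mpr le_rfl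
  have hz : u (x ⊓ w (u x)) = u x := by
    rw [hpc, min_eq_left h2]
  have hzx : x ⊓ w (u x) = x := by
    by_contra hne
    exact absurd hz (ne_of_lt (hx _ inf_le_left hne))
  exact le_antisymm ((le_of_inf_eq hzx)) h1
end

section
/- Every continuous, non-decreasing, perfectly complementary, and strictly monotonic utility function u : ℝ₊^m → ℝ is strictly quasi-concave: if u(x) > u(y), then u(λx + (1−λ)y) > u(y) for all λ ∈ (0,1). -/
/-
Let `S` be the set of goods of which `y` holds strictly less than `x`. Off `S` the convex
combination `z` gives at least `x`, on `S` strictly more than `y`. Replace `y` by a bundle `c`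
that agrees with `y` on `S` and exceeds `x` off `S`: then `c ⊓ x = y ⊓ x`, and perfect
complementarity forces `u c = u y < u x`. So `c` is not maximal, and strict monotonicity gives a
bundle `b > c` with `u b > u y` that coincides with `z` on `S`; hence
`u y < min (u b) (u x) = u (b ⊓ x) ≤ u z`.
-/

open scoped NNReal

def Maximal' {m : ℕ} (u : Bundle m → ℝ) (x : Bundle m) : Prop :=
  ∀ y : Bundle m, u y ≤ u x

namespace NNReal

theorem combo_self_of_le_one {t : ℝ≥0} (ht : t ≤ 1) (a : ℝ≥0) : t * a + (1 - t) * a = a := by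
  rw [← add_mul, add_tsub_cancel_of_le ht, one_mul]

theorem lt_combo_of_lt {a b t : ℝ≥0} (ht0 : 0 < t) (ht1 : t ≤ 1) (h : a < b) :
    a < t * b + (1 - t) * a :=
  calc a = t * a + (1 - t) * a := (combo_self_of_le_one ht1 a).symm
    _ < t * b + (1 - t) * a := add_lt_add_left (mul_lt_mul_of_pos_left h ht0) _

theorem le_combo_of_le {a b t : ℝ≥0} (ht : t ≤ 1) (h : a ≤ b) : a ≤ t * a + (1 - t) * b :=
  calc a = t * a + (1 - t) * a := (combo_self_of_le_one ht a).symm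
    _ ≤ t * a + (1 - t) * b := by gcongr

end NNReal

namespace PerfComp

variable {m : ℕ} {u : Bundle m → ℝ}

theorem apply_eq_of_inf_eq (hpc : PerfComp u) {c x y : Bundle m} (hcx : c ⊓ x = y ⊓ x)
    (hxy : u y < u x) : u c = u y := by
  have hmin : min (u c) (u x) = u y := by rw [← hpc, hcx, hpc, min_eq_left hxy.le]
  rcases min_choice (u c) (u x) with h | h
  · rwa [h] at hmin
  · exact absurd (h ▸ hmin) hxy.ne'

theorem lt_apply_of_forall_lt_of_forall_le (hpc : PerfComp u) (hmono : Monotone u)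
    (hsm : ∀ x : Bundle m, ¬ Maximal' u x → ∀ y : Bundle m, (∀ j, x j < y j) → u x < u y)
    {x y z : Bundle m} (hxy : u y < u x)
    (hlt : ∀ j, y j < x j → y j < z j) (hle : ∀ j, x j ≤ y j → x j ≤ z j) : u y < u z := by
  set c : Bundle m := fun j => if y j < x j then y j else x j + 1
  set b : Bundle m := fun j => if y j < x j then z j else x j + 2
  have hcx : c ⊓ x = y ⊓ x := by
    funext j
    by_cases h : y j < x j
    · simp [c, h]
    · simp [c, h, not_lt.mp h]
  have huc : u c = u y := hpc.apply_eq_of_inf_eq hcx hxy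
  have hc_not_max : ¬ Maximal' u c := fun hmax => (hmax x).not_gt (huc ▸ hxy)
  have hcb : ∀ j, c j < b j := by
    intro j
    by_cases h : y j < x j
    · simpa [c, b, h] using hlt j h
    · simp [c, b, h]
  have hbz : b ⊓ x ≤ z := by
    intro j
    by_cases h : y j < x j
    · simp [b, h]
    · exact inf_le_right.trans (hle j (not_lt.mp h))
  calc u y < min (u b) (u x) := lt_min (huc ▸ hsm c hc_not_max b hcb) hxy
    _ = u (b ⊓ x) := (hpc b x).symm
    _ ≤ u z := hmono hbz

end PerfComp

theorem perfComp_strictQuasiConcave_general {m : ℕ} (u : Bundle m → ℝ)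
    (hmono : Monotone u) (hpc : PerfComp u)
    (hsm : ∀ x : Bundle m, ¬ Maximal' u x →
      ∀ y : Bundle m, (∀ j, x j < y j) → u x < u y)
    (x y : Bundle m) (hxy : u y < u x)
    (lam : ℝ≥0) (h0 : 0 < lam) (h1 : lam < 1) :
    u y < u (fun j => lam * x j + (1 - lam) * y j) :=
  hpc.lt_apply_of_forall_lt_of_forall_le hmono hsm hxy
    (fun _ h => NNReal.lt_combo_of_lt h0 h1.le h)
    (fun _ h => NNReal.le_combo_of_le h1.le h)

/-- Every continuous, non-decreasing, perfectly complementary and strictly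
monotonic utility is strictly quasi-concave. -/
theorem perfComp_strictQuasiConcave {m : ℕ} (u : Bundle m → ℝ)
    (hcont : Continuous u) (hmono : Monotone u) (hpc : PerfComp u)
    (hsm : ∀ x : Bundle m, ¬ Maximal' u x →
      ∀ y : Bundle m, (∀ j, x j < y j) → u x < u y)
    (x y : Bundle m) (hxy : u y < u x)
    (lam : ℝ≥0) (h0 : 0 < lam) (h1 : lam < 1) :
    u y < u (fun j => lam * x j + (1 - lam) * y j) :=
  perfComp_strictQuasiConcave_general u hmono hpc hsm x y hxy lam h0 h1
end

section
/- In an economy where every agent's utility function u_i : ℝ₊^m → ℝ is continuous, non-decreasing, and perfectly complementary, every non-wasteful allocation is Pareto efficient. -/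
open scoped NNReal

/-- An allocation of `m` goods (each in unit supply) among `n` agents. -/
def IsAllocation {n m : ℕ} (X : Fin n → Bundle m) : Prop :=
  ∀ j, ∑ i, X i j ≤ 1

/-- A non-wasteful allocation: every bundle is parsimonious, and handing any agent
all the leftover goods would not change his utility. -/
def NonWasteful {n m : ℕ} (u : Fin n → Bundle m → ℝ) (X : Fin n → Bundle m) : Prop :=
  (∀ i, Parsimonious (u i) (X i)) ∧
  (∀ i, u i (fun j => X i j + (1 - ∑ k, X k j)) = u i (X i))

/-- In an economy of continuous, non-decreasing, perfectly complementary utilities,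
every non-wasteful allocation is Pareto efficient. -/
theorem nonWasteful_pareto {n m : ℕ} (u : Fin n → Bundle m → ℝ)
    (hcont : ∀ i, Continuous (u i)) (hmono : ∀ i, Monotone (u i))
    (hpc : ∀ i, PerfComp (u i))
    (X : Fin n → Bundle m) (hX : IsAllocation X) (hnw : NonWasteful u X) :
    ¬ ∃ Y : Fin n → Bundle m, IsAllocation Y ∧
        (∀ i, u i (X i) ≤ u i (Y i)) ∧ (∃ i, u i (X i) < u i (Y i)) := by
  rintro ⟨Y, hY, hall, i0, hi0⟩
  obtain ⟨hpar, hleft⟩ := hnw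
  -- every agent gets at least X i in Y
  have hXY : ∀ i, X i ≤ Y i := by
    intro i
    have h1 : u i (X i ⊓ Y i) = u i (X i) := by
      rw [hpc i, min_eq_left (hall i)]
    by_contra hne
    have hle : X i ⊓ Y i ≤ X i := inf_le_left
    have hne' : X i ⊓ Y i ≠ X i := by
      intro h
      exact hne (inf_eq_left.mp h)
    exact absurd h1 (ne_of_lt (hpar i (X i ⊓ Y i) hle hne'))
  -- Y i0 ≤ X i0 + leftover
  have hkey : Y i0 ≤ fun j => X i0 j + (1 - ∑ k, X k j) := by
    intro j
    have hrest : ∑ k ∈ Finset.univ.erase i0, X k j ≤ ∑ k ∈ Finset.univ.erase i0, Y k j :=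
      Finset.sum_le_sum fun k _ => hXY k j
    have hsplitX : X i0 j + ∑ k ∈ Finset.univ.erase i0, X k j = ∑ k, X k j :=
      Finset.add_sum_erase Finset.univ (fun k => X k j) (Finset.mem_univ i0)
    have hsplitY : Y i0 j + ∑ k ∈ Finset.univ.erase i0, Y k j = ∑ k, Y k j :=
      Finset.add_sum_erase Finset.univ (fun k => Y k j) (Finset.mem_univ i0)
    have h1 : Y i0 j + ∑ k ∈ Finset.univ.erase i0, X k j ≤ 1 := by
      calc Y i0 j + ∑ k ∈ Finset.univ.erase i0, X k j
          ≤ Y i0 j + ∑ k ∈ Finset.univ.erase i0, Y k j := by gcongr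
        _ = ∑ k, Y k j := hsplitY
        _ ≤ 1 := hY j
    have h2 : Y i0 j ≤ 1 - ∑ k ∈ Finset.univ.erase i0, X k j :=
      le_tsub_of_add_le_right h1
    have h3 : X i0 j + (1 - ∑ k, X k j) = 1 - ∑ k ∈ Finset.univ.erase i0, X k j := by
      have hXle : X i0 j + ∑ k ∈ Finset.univ.erase i0, X k j ≤ 1 := by
        rw [hsplitX]; exact hX j
      have hXle' : X i0 j ≤ 1 - ∑ k ∈ Finset.univ.erase i0, X k j :=
        le_tsub_of_add_le_right hXle
      rw [← hsplitX, tsub_add_eq_tsub_tsub_swap]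
      exact add_tsub_cancel_of_le hXle'
    show Y i0 j ≤ X i0 j + (1 - ∑ k, X k j)
    rw [h3]; exact h2
  have := (hmono i0) hkey
  rw [hleft i0] at this
  linarith
end

section
/- Let u : ℝ₊^m → ℝ be continuous, non-decreasing, and perfectly complementary, and let 1 ≤ p < ∞. Then u is compatible with the L_p norm: for any two parsimonious bundles x, y of u, if u(x) > u(y) then ‖x‖_p > ‖y‖_p. -/
open scoped NNReal

/-- The `L_p` norm of a bundle, `(∑ j, (x j)^p)^(1/p)`. -/
noncomputable def lpNorm {m : ℕ} (p : ℝ) (x : Bundle m) : ℝ :=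
  (∑ j, (x j : ℝ) ^ p) ^ (1 / p)

/-- Every continuous, non-decreasing, perfectly complementary utility is compatible
with the `L_p` norm for `1 ≤ p < ∞`: the `L_p` norm strictly increases along
parsimonious bundles of strictly increasing utility. -/
theorem perfComp_compatible_lp {m : ℕ} (u : Bundle m → ℝ)
    (hcont : Continuous u) (hmono : Monotone u) (hpc : PerfComp u)
    (p : ℝ) (hp : 1 ≤ p)
    (x y : Bundle m) (hx : Parsimonious u x) (hy : Parsimonious u y)
    (hxy : u y < u x) :
    lpNorm p y < lpNorm p x := by
  have hp0 : (0 : ℝ) < p := lt_of_lt_of_le one_pos hp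
  -- first show y ≤ x
  have hinf : u (x ⊓ y) = u y := by
    rw [hpc x y, min_eq_right hxy.le]
  have hle : y ≤ x := by
    by_contra h
    have hne : x ⊓ y ≠ y := by
      intro hEq
      exact h (inf_eq_right.mp hEq)
    have := hy (x ⊓ y) inf_le_right hne
    rw [hinf] at this
    exact lt_irrefl _ this
  have hne : y ≠ x := fun h => absurd hxy (by rw [h]; exact lt_irrefl _)
  obtain ⟨j, hj⟩ : ∃ j, y j < x j := by
    by_contra h
    push_neg at h
    exact hne (le_antisymm hle (fun j => h j))
  have hsum : (∑ j, (y j : ℝ) ^ p) < ∑ j, (x j : ℝ) ^ p := by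
    apply Finset.sum_lt_sum
    · intro i _
      exact Real.rpow_le_rpow (y i).coe_nonneg (by exact_mod_cast hle i) hp0.le
    · exact ⟨j, Finset.mem_univ j,
        Real.rpow_lt_rpow (y j).coe_nonneg (by exact_mod_cast hj) hp0⟩
  have hnonneg : (0 : ℝ) ≤ ∑ j, (y j : ℝ) ^ p :=
    Finset.sum_nonneg fun i _ => Real.rpow_nonneg (y i).coe_nonneg p
  exact Real.rpow_lt_rpow hnonneg hsum (by positivity)
end

section
/- Let (π, X) be a Fisher market equilibrium with unit supplies for agents with continuous, strictly monotonic, non-satiable, perfectly complementary utilities u_i and budgets e_i > 0 summing to 1, and let Y ≤ X be a parsimonious allocation with u_i(y^i) = u_i(x^i) for all i. Then Y is bottleneck-based fair: for every agent i there exists a good j with π_j > 0 such that ∑_k y^k_j = 1 (j is a bottleneck) and y^i_j ≥ e_i. -/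
open scoped NNReal

def NonSatiableStrictMono {m : ℕ} (u : Bundle m → ℝ) : Prop :=
  (∀ x : Bundle m, ∃ y : Bundle m, u x < u y) ∧
  (∀ x y : Bundle m, (∀ j, x j < y j) → u x < u y)

def FisherEquilibrium {n m : ℕ} (u : Fin n → Bundle m → ℝ) (e : Fin n → ℝ≥0)
    (pr : Fin m → ℝ≥0) (X : Fin n → Bundle m) : Prop :=
  (∀ i, (∑ j, pr j * X i j) ≤ e i ∧
    ∀ y : Bundle m, (∑ j, pr j * y j) ≤ e i → u i y ≤ u i (X i)) ∧
  (∀ j, ∑ i, X i j = 1)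

/-!
At an equilibrium every agent spends her whole budget: otherwise adding a small
amount of every good keeps her within budget and strictly raises her utility.
Because `Y ≤ X` gives the same utility, `Y i` also costs exactly `e i`, so `Y` and
`X` agree on every good with a positive price. Summing the budgets shows that
prices add up to `∑ e = 1`, hence `e i = ∑ pr j * X i j` is a price-weighted average
of the quantities `X i j`; some positively priced good `j` therefore has
`X i j ≥ e i`, and since it is fully allocated by `X = Y` it is a bottleneck.
-/

open Finset

section Budget

variable {ι : Type*} [Fintype ι]

theorem cost_eq_budget_of_optimal {u : (ι → ℝ≥0) → ℝ}
    (hmono : ∀ x y : ι → ℝ≥0, (∀ j, x j < y j) → u x < u y)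
    {p : ι → ℝ≥0} {b : ℝ≥0} {x w : ι → ℝ≥0}
    (hopt : ∀ y : ι → ℝ≥0, ∑ j, p j * y j ≤ b → u y ≤ u x)
    (hw : ∑ j, p j * w j ≤ b) (hwx : u x ≤ u w) :
    ∑ j, p j * w j = b := by
  refine hw.eq_or_lt.resolve_right fun hlt => ?_
  set S := ∑ j, p j * w j
  set ε := (b - S) / (∑ j, p j + 1)
  have hε : 0 < ε := div_pos (tsub_pos_of_lt hlt) (by positivity)
  have hcost : ∑ j, p j * (w j + ε) ≤ b :=
    calc ∑ j, p j * (w j + ε) = S + ε * ∑ j, p j := by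
          simp only [S, mul_add, sum_add_distrib, mul_comm ε, sum_mul]
      _ ≤ S + ε * (∑ j, p j + 1) := by gcongr; exact le_self_add
      _ = b := by rw [div_mul_cancel₀ _ (by positivity), add_tsub_cancel_of_le hw]
  have hbetter : u w < u (fun j => w j + ε) := hmono _ _ fun j => lt_add_of_pos_right _ hε
  exact (hopt _ hcost).not_gt (hwx.trans_lt hbetter)

theorem eq_of_le_of_cost_eq {p w x : ι → ℝ≥0} (hwx : w ≤ x)
    (hcost : ∑ j, p j * w j = ∑ j, p j * x j) {j : ι} (hj : 0 < p j) : w j = x j := by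
  have hterm := (sum_eq_sum_iff_of_le fun k _ => mul_le_mul_right (hwx k) (p k)).mp hcost
  exact mul_left_cancel₀ hj.ne' (hterm j (mem_univ j))

theorem exists_pos_le_of_cost_eq_mul_sum {p x : ι → ℝ≥0} {c : ℝ≥0}
    (hp : ∑ j, p j ≠ 0) (hcost : ∑ j, p j * x j = c * ∑ j, p j) :
    ∃ j, 0 < p j ∧ c ≤ x j := by
  classical
  set s := univ.filter fun j => p j ≠ 0
  have hs : s.Nonempty := by
    obtain ⟨j, -, hj⟩ := exists_ne_zero_of_sum_ne_zero hp
    exact ⟨j, mem_filter.mpr ⟨mem_univ j, hj⟩⟩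
  have hrestrict (f : ι → ℝ≥0) : ∑ j ∈ s, p j * f j = ∑ j, p j * f j :=
    sum_filter_of_ne fun j _ hj => left_ne_zero_of_mul hj
  have hle : ∑ j ∈ s, p j * c ≤ ∑ j ∈ s, p j * x j := by
    rw [hrestrict, hrestrict, ← sum_mul, mul_comm, hcost]
  obtain ⟨j, hjs, hj⟩ := exists_le_of_sum_le hs hle
  have hpj : 0 < p j := pos_iff_ne_zero.mpr (mem_filter.mp hjs).2
  exact ⟨j, hpj, le_of_mul_le_mul_left hj hpj⟩

end Budget

namespace FisherEquilibrium

variable {n m : ℕ} {u : Fin n → Bundle m → ℝ} {e : Fin n → ℝ≥0} {pr : Fin m → ℝ≥0}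
  {X : Fin n → Bundle m}

theorem cost_eq_budget (heq : FisherEquilibrium u e pr X)
    (hmono : ∀ i, ∀ x y : Bundle m, (∀ j, x j < y j) → u i x < u i y)
    {i : Fin n} {w : Bundle m} (hwX : w ≤ X i) (hwu : u i w = u i (X i)) :
    ∑ j, pr j * w j = e i :=
  cost_eq_budget_of_optimal (hmono i) (heq.1 i).2
    ((sum_le_sum fun j _ => mul_le_mul_right (hwX j) _).trans (heq.1 i).1) hwu.ge

theorem sum_price_eq_sum_budget (heq : FisherEquilibrium u e pr X)
    (hmono : ∀ i, ∀ x y : Bundle m, (∀ j, x j < y j) → u i x < u i y) :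
    ∑ j, pr j = ∑ i, e i :=
  calc ∑ j, pr j = ∑ j, ∑ i, pr j * X i j := by simp only [← mul_sum, heq.2, mul_one]
    _ = ∑ i, ∑ j, pr j * X i j := sum_comm
    _ = ∑ i, e i := sum_congr rfl fun i _ => heq.cost_eq_budget hmono le_rfl rfl

end FisherEquilibrium

theorem fisher_equilibrium_BBF_general {n m : ℕ} (u : Fin n → Bundle m → ℝ)
    (hns : ∀ i, NonSatiableStrictMono (u i))
    (e : Fin n → ℝ≥0) (hesum : ∑ i, e i = 1)
    (pr : Fin m → ℝ≥0) (X : Fin n → Bundle m)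
    (heq : FisherEquilibrium u e pr X)
    (Y : Fin n → Bundle m) (hYX : ∀ i, Y i ≤ X i)
    (hYu : ∀ i, u i (Y i) = u i (X i)) :
    ∀ i, ∃ j, 0 < pr j ∧ (∑ k, Y k j = 1) ∧ e i ≤ Y i j := by
  intro i
  have hmono i := (hns i).2
  have hprice : ∑ j, pr j = 1 := (heq.sum_price_eq_sum_budget hmono).trans hesum
  have hcostX : ∑ j, pr j * X i j = e i * ∑ j, pr j := by
    rw [hprice, mul_one, heq.cost_eq_budget hmono le_rfl rfl]
  obtain ⟨j, hj, hle⟩ := exists_pos_le_of_cost_eq_mul_sum (hprice ▸ one_ne_zero) hcostX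
  have hYXj (k : Fin n) : Y k j = X k j :=
    eq_of_le_of_cost_eq (hYX k)
      ((heq.cost_eq_budget hmono (hYX k) (hYu k)).trans
        (heq.cost_eq_budget hmono le_rfl rfl).symm) hj
  refine ⟨j, hj, ?_, hYXj i ▸ hle⟩
  simp only [hYXj, heq.2 j]

/-- The parsimonious reduction of a Fisher market equilibrium is bottleneck-based
fair: every agent receives at least his entitlement of some bottleneck good. -/
theorem fisher_equilibrium_BBF {n m : ℕ} (u : Fin n → Bundle m → ℝ)
    (hcont : ∀ i, Continuous (u i)) (hns : ∀ i, NonSatiableStrictMono (u i))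
    (hpc : ∀ i, PerfComp (u i))
    (e : Fin n → ℝ≥0) (he : ∀ i, 0 < e i) (hesum : ∑ i, e i = 1)
    (pr : Fin m → ℝ≥0) (X : Fin n → Bundle m)
    (heq : FisherEquilibrium u e pr X)
    (Y : Fin n → Bundle m) (hYX : ∀ i, Y i ≤ X i)
    (hYpars : ∀ i, Parsimonious (u i) (Y i))
    (hYu : ∀ i, u i (Y i) = u i (X i)) :
    ∀ i, ∃ j, 0 < pr j ∧ (∑ k, Y k j = 1) ∧ e i ≤ Y i j :=
  fisher_equilibrium_BBF_general u hns e hesum pr X heq Y hYX hYu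
end
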